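/- Assume p and q are odd. Then the number of tuples (z, b, a), where z is a ρ-vector, b_1 ≥ b_2 ≥ … ≥ b_{q−1} ≥ 0 and a_1 ≥ a_2 ≥ … ≥ a_p ≥ 0 are integers, satisfying z_i − 2b_i = q − i for all 1 ≤ i ≤ q−1 and z_{q−1+j} + 2a_{p+1−j} = −j for all 1 ≤ j ≤ p, equals the binomial coefficient C(k−1, (p−1)/2) = C(k−1, (q−1)/2). -/

import Mathlib

/-- A solution for the Dirac cohomology multiplicity count of `X'(p,q;1,0)` for
`Sp(2n,ℝ)`, `n = 2k−1 = p+q−1`: a ρ-vector `z` (strictly decreasing with absolute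
values exactly `{1, …, n}`), weakly decreasing nonnegative integers
`b_1 ≥ … ≥ b_{q−1} ≥ 0`, `a_1 ≥ … ≥ a_p ≥ 0` with `z_i − 2b_i = q − i` for
`1 ≤ i ≤ q−1` and `z_{q−1+j} + 2a_{p+1−j} = −j` for `1 ≤ j ≤ p`
(written here with 0-based indices). -/
structure RhoSol (n p q : ℕ) (hn : q - 1 + p = n) where
  z : Fin n → ℤ
  b : Fin (q - 1) → ℤ
  a : Fin p → ℤ
  z_anti : StrictAnti z
  z_abs : Finset.univ.image (fun i => |z i|) = Finset.Icc (1 : ℤ) (n : ℤ)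
  b_anti : Antitone b
  a_anti : Antitone a
  b_nonneg : ∀ i, 0 ≤ b i
  a_nonneg : ∀ m, 0 ≤ a m
  hzb : ∀ i : Fin (q - 1),
    z ⟨i.1, by have := i.isLt; omega⟩ - 2 * b i = (q : ℤ) - 1 - i.1
  hza : ∀ j : Fin p,
    z ⟨q - 1 + j.1, by have := j.isLt; omega⟩ +
      2 * a ⟨p - 1 - j.1, by have := j.isLt; omega⟩ = -(j.1 : ℤ) - 1

/-!
The first `q - 1` entries of a solution are positive and the last `p` negative. If
`f₀ < f₁ < ⋯` lists the positive values, the equations for `b` say `f_t = t + 1 + 2 c_t` with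
`c_t ≥ 0`; since `f_t - t - 1` is the number of negative absolute values below `f_t`, this means
that each positive value has an even number of negative absolute values below it (monotonicity
of `b` is then automatic). The same holds with the roles exchanged, so a solution amounts to a
splitting `{1, …, 2k - 1} = P ⊔ N` with `#N = p` in which every element of either part is
preceded by an even number of elements of the other. Scanning upwards, such splittings are
exactly those in which every block `{2i + 1, 2i + 2}`, `i < k - 1`, lies in a single part; as
`#N` is odd, `2k - 1 ∈ N`, and choosing the `(p - 1) / 2` blocks contained in `N` gives
`C(k - 1, (p - 1) / 2)`.
-/

open Finset

theorem StrictMono.card_filter_lt_image {α : Type*} [LinearOrder α] {m : ℕ} {e : Fin m → α}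
    (he : StrictMono e) (j : Fin m) : #{x ∈ univ.image e | x < e j} = j := by
  rw [filter_image, card_image_of_injective _ he.injective]
  simp only [he.lt_iff_lt]
  rw [← Fin.card_Iio]
  congr 1
  ext; simp

def EvenlyPrecededBy (A B : Finset ℤ) : Prop := ∀ v ∈ A, Even #{x ∈ B | x < v}

section Partition

variable {A B : Finset ℤ} {n v : ℤ}

theorem card_filter_lt_add_card_filter_lt (hAB : Disjoint A B) (hU : A ∪ B = Icc 1 n)
    (h1 : 1 ≤ v) (h2 : v ≤ n + 1) : (#{x ∈ A | x < v} : ℤ) + #{x ∈ B | x < v} = v - 1 := by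
  rw [← Nat.cast_add, ← card_union_of_disjoint (disjoint_filter_filter hAB), ← filter_union, hU,
    show {x ∈ Icc 1 n | x < v} = Ico 1 v by ext; simp only [mem_filter, mem_Icc, mem_Ico]; omega,
    Int.card_Ico]
  omega

theorem StrictMono.eq_add_card_filter_lt (hAB : Disjoint A B) (hU : A ∪ B = Icc 1 n) {m : ℕ}
    {e : Fin m → ℤ} (he : StrictMono e) (hA : univ.image e = A) (j : Fin m) :
    e j = j + 1 + #{x ∈ B | x < e j} := by
  have hmem : e j ∈ Icc 1 n := hU ▸ mem_union_left _ (hA ▸ mem_image_of_mem e (mem_univ j))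
  have := card_filter_lt_add_card_filter_lt hAB hU (v := e j) (mem_Icc.1 hmem).1
    (by linarith [(mem_Icc.1 hmem).2])
  rw [← hA, he.card_filter_lt_image] at this
  omega

theorem card_filter_lt_add_one_of_mem (hv : v ∈ A) :
    #{x ∈ A | x < v + 1} = #{x ∈ A | x < v} + 1 := by
  have : {x ∈ A | x < v + 1} = insert v {x ∈ A | x < v} := by
    ext x; simp only [mem_filter, mem_insert]; constructor
    · rintro ⟨hx, hlt⟩; exact (eq_or_lt_of_le (Int.lt_add_one_iff.1 hlt)).imp id (⟨hx, ·⟩)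
    · rintro (rfl | ⟨hx, hlt⟩) <;> [exact ⟨hv, by omega⟩; exact ⟨hx, by omega⟩]
  rw [this, card_insert_of_notMem (by simp)]

theorem filter_lt_add_one_of_notMem (hv : v ∉ A) :
    {x ∈ A | x < v + 1} = {x ∈ A | x < v} := by
  ext x; simp only [mem_filter]; constructor
  · rintro ⟨hx, hlt⟩; exact ⟨hx, lt_of_le_of_ne (by omega) (by rintro rfl; exact hv hx)⟩
  · rintro ⟨hx, hlt⟩; exact ⟨hx, by omega⟩

theorem add_one_mem_of_mem (hU : A ∪ B = Icc 1 n) (hB : EvenlyPrecededBy B A) (hv : v ∈ A)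
    (hvn : v + 1 ≤ n) (hev : Even #{x ∈ A | x < v}) : v + 1 ∈ A := by
  have hv1 : 1 ≤ v := (mem_Icc.1 (hU ▸ mem_union_left B hv)).1
  have : v + 1 ∈ A ∪ B := hU ▸ mem_Icc.2 ⟨by omega, hvn⟩
  refine (mem_union.1 this).resolve_right fun hB' => ?_
  have := hB _ hB'
  rw [card_filter_lt_add_one_of_mem hv, Nat.even_add_one] at this
  exact this hev

theorem mem_iff_add_one_mem (hAB : Disjoint A B) (hU : A ∪ B = Icc 1 n)
    (hA : EvenlyPrecededBy A B) (hB : EvenlyPrecededBy B A) (hv1 : 1 ≤ v) (hvn : v + 1 ≤ n)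
    (hevA : Even #{x ∈ A | x < v}) (hevB : Even #{x ∈ B | x < v}) : v ∈ A ↔ v + 1 ∈ A := by
  refine ⟨fun h => add_one_mem_of_mem hU hB h hvn hevA, fun h => ?_⟩
  have : v ∈ A ∪ B := hU ▸ mem_Icc.2 ⟨hv1, by omega⟩
  refine (mem_union.1 this).resolve_right fun hvB => ?_
  exact disjoint_left.1 hAB h (add_one_mem_of_mem (union_comm A B ▸ hU) hA hvB hvn hevB)

theorem mem_iff_mem_of_evenlyPrecededBy (hAB : Disjoint A B) (hU : A ∪ B = Icc 1 n)
    (hA : EvenlyPrecededBy A B) (hB : EvenlyPrecededBy B A) (i : ℕ) (hi : 2 * (i : ℤ) + 2 ≤ n) :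
    2 * (i : ℤ) + 1 ∈ A ↔ 2 * (i : ℤ) + 2 ∈ A := by
  have hsum (i : ℕ) (hi : 2 * (i : ℤ) ≤ n) :
      (#{x ∈ A | x < 2 * (i : ℤ) + 1} : ℤ) + #{x ∈ B | x < 2 * (i : ℤ) + 1} = 2 * i := by
    have := card_filter_lt_add_card_filter_lt hAB hU (v := 2 * i + 1) (by omega) (by omega)
    omega
  have hevB (i : ℕ) (hi : 2 * (i : ℤ) ≤ n) (h : Even #{x ∈ A | x < 2 * (i : ℤ) + 1}) :
      Even #{x ∈ B | x < 2 * (i : ℤ) + 1} := by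
    have := hsum i hi
    rcases h with ⟨r, hr⟩
    exact ⟨i - r, by omega⟩
  -- Scanning upwards, each initial segment `[1, 2i]` meets `A` (and `B`) evenly often.
  have hevA (i : ℕ) (hi : 2 * (i : ℤ) ≤ n) : Even #{x ∈ A | x < 2 * (i : ℤ) + 1} := by
    induction i with
    | zero => exact ⟨0, by have := hsum 0 (by omega); omega⟩
    | succ i ih =>
      have h := ih (by omega)
      have hiff := mem_iff_add_one_mem hAB hU hA hB (v := 2 * i + 1) (by omega) (by omega)
        h (hevB i (by omega) h)
      rw [show 2 * ((i + 1 : ℕ) : ℤ) + 1 = 2 * i + 1 + 1 + 1 by push_cast; ring]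
      by_cases hmem : 2 * (i : ℤ) + 1 ∈ A
      · rw [card_filter_lt_add_one_of_mem (hiff.1 hmem), card_filter_lt_add_one_of_mem hmem]
        exact h.add even_two
      · rw [filter_lt_add_one_of_notMem (hiff.not.1 hmem), filter_lt_add_one_of_notMem hmem]
        exact h
  exact mem_iff_add_one_mem hAB hU hA hB (by omega) (by omega) (hevA i (by omega))
    (hevB i (by omega) (hevA i (by omega)))

end Partition

def pairBlocks (S : Finset ℤ) : Finset ℤ := S.biUnion fun i => {2 * i + 1, 2 * i + 2}

section PairBlocks

variable {S : Finset ℤ} {v : ℤ}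

theorem mem_pairBlocks : v ∈ pairBlocks S ↔ (v - 1) / 2 ∈ S := by
  simp only [pairBlocks, mem_biUnion, mem_insert, mem_singleton]
  constructor
  · rintro ⟨i, hi, rfl | rfl⟩ <;> convert hi using 1 <;> omega
  · exact fun h => ⟨_, h, by omega⟩

theorem card_pairBlocks : #(pairBlocks S) = 2 * #S := by
  rw [pairBlocks, card_biUnion, sum_congr rfl fun i _ => card_pair (by omega), sum_const,
    smul_eq_mul, mul_comm]
  intro i _ j _ hij
  simp only [Function.onFun, disjoint_insert_left, disjoint_insert_right, disjoint_singleton,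
    mem_insert, mem_singleton]
  omega

theorem even_card_filter_lt_pairBlocks (hv : v ∉ pairBlocks S) :
    Even #{x ∈ pairBlocks S | x < v} := by
  have : {x ∈ pairBlocks S | x < v} = pairBlocks {i ∈ S | i < (v - 1) / 2} := by
    rw [mem_pairBlocks] at hv
    ext x
    simp only [mem_filter, mem_pairBlocks]
    constructor
    · rintro ⟨hx, hxv⟩
      refine ⟨hx, lt_of_le_of_ne (by omega) fun h => hv (h ▸ hx)⟩
    · rintro ⟨hx, hxv⟩
      exact ⟨hx, by omega⟩
  rw [this, card_pairBlocks]
  exact even_two_mul _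

end PairBlocks

def blockSet (k : ℤ) (S : Finset ℤ) : Finset ℤ := insert (2 * k - 1) (pairBlocks S)

/-- The possible sets `{|zᵢ| : zᵢ < 0}` of solutions, see `RhoSol.negSet`. -/
def IsAdmissible (n : ℤ) (p : ℕ) (N : Finset ℤ) : Prop :=
  N ⊆ Icc 1 n ∧ #N = p ∧ EvenlyPrecededBy N (Icc 1 n \ N) ∧ EvenlyPrecededBy (Icc 1 n \ N) N

section BlockSet

variable {k : ℤ} {S : Finset ℤ}

theorem isAdmissible_blockSet (hk : 0 < k) (hS : S ⊆ Ico 0 (k - 1)) :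
    IsAdmissible (2 * k - 1) (2 * #S + 1) (blockSet k S) := by
  have hsub : ∀ v ∈ pairBlocks S, v ≤ 2 * k - 2 := fun v hv => by
    have := mem_Ico.1 (hS (mem_pairBlocks.1 hv)); omega
  have htop : 2 * k - 1 ∉ pairBlocks S := fun h => by have := hsub _ h; omega
  have hcompl : Icc 1 (2 * k - 1) \ blockSet k S = pairBlocks (Ico 0 (k - 1) \ S) := by
    ext v
    simp only [blockSet, mem_sdiff, mem_Icc, mem_insert, mem_pairBlocks, mem_Ico]
    constructor
    · rintro ⟨hv, hne⟩; exact ⟨by omega, fun h => hne (.inr h)⟩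
    · rintro ⟨hv, hvS⟩
      exact ⟨by omega, by rintro (rfl | h) <;> [omega; exact hvS h]⟩
  refine ⟨fun v hv => ?_, ?_, fun v hv => ?_, fun v hv => ?_⟩
  · rcases mem_insert.1 hv with rfl | hv
    · exact mem_Icc.2 ⟨by omega, le_rfl⟩
    · have := mem_Ico.1 (hS (mem_pairBlocks.1 hv))
      exact mem_Icc.2 ⟨by omega, by omega⟩
  · rw [blockSet, card_insert_of_notMem htop, card_pairBlocks]
  · rw [hcompl]
    refine even_card_filter_lt_pairBlocks fun h => ?_
    rw [← hcompl] at h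
    exact (mem_sdiff.1 h).2 hv
  · rw [hcompl] at hv
    have hvk : v ≤ 2 * k - 2 := by have := mem_Ico.1 (mem_sdiff.1 (mem_pairBlocks.1 hv)).1; omega
    rw [blockSet, filter_insert, if_neg (by omega)]
    exact even_card_filter_lt_pairBlocks
      fun h => (mem_sdiff.1 (mem_pairBlocks.1 hv)).2 (mem_pairBlocks.1 h)

theorem exists_blockSet_eq_of_isAdmissible {p : ℕ} (hp : Odd p) {N : Finset ℤ}
    (hN : IsAdmissible (2 * k - 1) p N) : ∃ S ⊆ Ico 0 (k - 1), blockSet k S = N := by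
  obtain ⟨hNsub, hNcard, hNP, hPN⟩ := hN
  have hpair (i : ℤ) (hi : i ∈ Ico 0 (k - 1)) : 2 * i + 1 ∈ N ↔ 2 * i + 2 ∈ N := by
    rw [mem_Ico] at hi
    lift i to ℕ using hi.1
    exact mem_iff_mem_of_evenlyPrecededBy disjoint_sdiff (union_sdiff_of_subset hNsub) hNP hPN i
      (by omega)
  set S := {i ∈ Ico 0 (k - 1) | 2 * i + 1 ∈ N}
  have herase : N.erase (2 * k - 1) = pairBlocks S := by
    ext v
    simp only [mem_erase, mem_pairBlocks, S, mem_filter]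
    constructor
    · rintro ⟨hne, hv⟩
      have hv' := mem_Icc.1 (hNsub hv)
      have hi : (v - 1) / 2 ∈ Ico 0 (k - 1) := mem_Ico.2 ⟨by omega, by omega⟩
      refine ⟨hi, ?_⟩
      rcases (by omega : v = 2 * ((v - 1) / 2) + 1 ∨ v = 2 * ((v - 1) / 2) + 2) with h | h
      · rwa [← h]
      · rw [hpair _ hi, ← h]; exact hv
    · rintro ⟨hi, hmem⟩
      have hi' := mem_Ico.1 hi
      refine ⟨by omega, ?_⟩
      rcases (by omega : v = 2 * ((v - 1) / 2) + 1 ∨ v = 2 * ((v - 1) / 2) + 2) with h | h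
      · rwa [h]
      · rw [h, ← hpair _ hi]; exact hmem
  have htop : 2 * k - 1 ∈ N := by
    by_contra h
    rw [erase_eq_of_notMem h] at herase
    rw [herase, card_pairBlocks] at hNcard
    exact Nat.not_even_iff_odd.2 hp (hNcard ▸ even_two_mul _)
  exact ⟨S, filter_subset _ _, by rw [blockSet, ← herase, insert_erase htop]⟩

theorem isAdmissible_iff_mem_image_blockSet {k : ℤ} (hk : 0 < k) {p : ℕ} (hp : Odd p)
    {N : Finset ℤ} : IsAdmissible (2 * k - 1) p N ↔
      N ∈ (powersetCard ((p - 1) / 2) (Ico 0 (k - 1))).image (blockSet k) := by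
  simp only [mem_image, mem_powersetCard]
  constructor
  · intro hN
    obtain ⟨S, hS, rfl⟩ := exists_blockSet_eq_of_isAdmissible hp hN
    have := (isAdmissible_blockSet hk hS).2.1.symm.trans hN.2.1
    exact ⟨S, ⟨hS, by omega⟩, rfl⟩
  · rintro ⟨S, ⟨hS, hcard⟩, rfl⟩
    obtain ⟨r, rfl⟩ := hp
    convert isAdmissible_blockSet hk hS using 2
    omega

end BlockSet

theorem blockSet_injOn (k : ℤ) : Set.InjOn (blockSet k) {S | S ⊆ Ico 0 (k - 1)} := by
  intro S hS T hT hST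
  have hpairs (S : Finset ℤ) (hS : S ⊆ Ico 0 (k - 1)) :
      (blockSet k S).erase (2 * k - 1) = pairBlocks S :=
    erase_insert fun h => by have := mem_Ico.1 (hS (mem_pairBlocks.1 h)); omega
  ext i
  have hi : (2 * i + 1 - 1) / 2 = i := by omega
  rw [← hi, ← mem_pairBlocks, ← mem_pairBlocks, ← hpairs S hS, ← hpairs T hT, hST]

theorem exists_rev_or_add_eq {n p q : ℕ} (hn : q - 1 + p = n) (i : Fin n) :
    (∃ t : Fin (q - 1), i = ⟨t.rev, by omega⟩) ∨ ∃ j : Fin p, i = ⟨q - 1 + j, by omega⟩ := by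
  by_cases h : i < q - 1
  · exact .inl ⟨Fin.rev ⟨i, h⟩, by ext; simp only [Fin.rev_rev]⟩
  · exact .inr ⟨⟨i - (q - 1), by omega⟩, by ext; simp only; omega⟩

namespace RhoSol

variable {n p q : ℕ} {hn : q - 1 + p = n}

/-- In the paper's 1-based indexing, `pos t = z_{q-1-t}` and `neg j = -z_{q+j}`. -/
def pos (s : RhoSol n p q hn) (t : Fin (q - 1)) : ℤ := s.z ⟨t.rev, by omega⟩

def neg (s : RhoSol n p q hn) (j : Fin p) : ℤ := -s.z ⟨q - 1 + j, by omega⟩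

def posSet (s : RhoSol n p q hn) : Finset ℤ := univ.image s.pos

def negSet (s : RhoSol n p q hn) : Finset ℤ := univ.image s.neg

theorem pos_eq (s : RhoSol n p q hn) (t : Fin (q - 1)) : s.pos t = t + 1 + 2 * s.b t.rev := by
  have := s.hzb t.rev
  have := Fin.val_rev t
  rw [pos]
  omega

theorem neg_eq (s : RhoSol n p q hn) (j : Fin p) : s.neg j = j + 1 + 2 * s.a j.rev := by
  have := s.hza j
  rw [show (⟨p - 1 - j, _⟩ : Fin p) = j.rev by ext; simp only [Fin.val_rev]; omega] at this
  rw [neg]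
  omega

theorem strictMono_pos (s : RhoSol n p q hn) : StrictMono s.pos :=
  fun _ _ h => s.z_anti (Fin.mk_lt_mk.2 (Fin.rev_lt_rev.2 h))

theorem strictMono_neg (s : RhoSol n p q hn) : StrictMono s.neg :=
  fun _ _ h => neg_lt_neg (s.z_anti (Fin.mk_lt_mk.2 (by simpa using h)))

theorem one_le_pos (s : RhoSol n p q hn) (t : Fin (q - 1)) : 1 ≤ s.pos t := by
  have := s.b_nonneg t.rev; rw [pos_eq]; omega

theorem one_le_neg (s : RhoSol n p q hn) (j : Fin p) : 1 ≤ s.neg j := by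
  have := s.a_nonneg j.rev; rw [neg_eq]; omega

theorem abs_z_pos (s : RhoSol n p q hn) (t : Fin (q - 1)) :
    |s.z ⟨t.rev, by omega⟩| = s.pos t :=
  abs_of_pos (s.one_le_pos t)

theorem abs_z_neg (s : RhoSol n p q hn) (j : Fin p) :
    |s.z ⟨q - 1 + j, by omega⟩| = s.neg j := by
  rw [abs_of_neg (by have := s.one_le_neg j; rw [neg] at this; omega), neg]

theorem posSet_union_negSet (s : RhoSol n p q hn) : s.posSet ∪ s.negSet = Icc 1 (n : ℤ) := by
  rw [← s.z_abs]
  ext v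
  simp only [posSet, negSet, mem_union, mem_image, mem_univ, true_and]
  constructor
  · rintro (⟨t, rfl⟩ | ⟨j, rfl⟩)
    · exact ⟨_, s.abs_z_pos t⟩
    · exact ⟨_, s.abs_z_neg j⟩
  · rintro ⟨i, rfl⟩
    rcases exists_rev_or_add_eq hn i with ⟨t, rfl⟩ | ⟨j, rfl⟩
    · exact .inl ⟨t, (s.abs_z_pos t).symm⟩
    · exact .inr ⟨j, (s.abs_z_neg j).symm⟩

theorem disjoint_posSet_negSet (s : RhoSol n p q hn) : Disjoint s.posSet s.negSet := by
  rw [← card_union_eq_card_add_card, posSet_union_negSet, posSet, negSet,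
    card_image_of_injective _ s.strictMono_pos.injective,
    card_image_of_injective _ s.strictMono_neg.injective, Int.card_Icc]
  simp only [card_univ, Fintype.card_fin]
  omega

theorem posSet_eq_sdiff_negSet (s : RhoSol n p q hn) : s.posSet = Icc 1 (n : ℤ) \ s.negSet := by
  rw [← s.posSet_union_negSet, union_sdiff_cancel_right s.disjoint_posSet_negSet]

theorem isAdmissible_negSet (s : RhoSol n p q hn) : IsAdmissible n p s.negSet := by
  have hU := s.posSet_union_negSet
  have hD := s.disjoint_posSet_negSet
  refine ⟨hU ▸ subset_union_right, ?_, ?_, ?_⟩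
  · rw [negSet, card_image_of_injective _ s.strictMono_neg.injective, card_univ,
      Fintype.card_fin]
  · rw [← posSet_eq_sdiff_negSet]
    intro v hv
    obtain ⟨j, -, rfl⟩ := mem_image.1 hv
    have := s.strictMono_neg.eq_add_card_filter_lt hD.symm (by rwa [union_comm]) rfl j
    have := s.neg_eq j
    exact Int.even_coe_nat _ |>.1 ⟨s.a j.rev, by omega⟩
  · rw [← posSet_eq_sdiff_negSet]
    intro v hv
    obtain ⟨t, -, rfl⟩ := mem_image.1 hv
    have := s.strictMono_pos.eq_add_card_filter_lt hD hU rfl t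
    have := s.pos_eq t
    exact Int.even_coe_nat _ |>.1 ⟨s.b t.rev, by omega⟩

theorem ext_of_z {s s' : RhoSol n p q hn} (h : s.z = s'.z) : s = s' := by
  have hb : s.b = s'.b := funext fun i => by
    have := s.hzb i; have := s'.hzb i; rw [h] at *; omega
  have ha : s.a = s'.a := funext fun m => by
    have h₁ := s.neg_eq m.rev; have h₂ := s'.neg_eq m.rev
    simp only [Fin.rev_rev, neg, h] at h₁ h₂; omega
  cases s; cases s'; subst h hb ha; rfl

theorem negSet_injective : Function.Injective (negSet : RhoSol n p q hn → Finset ℤ) := by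
  intro s s' h
  have hpos : s.pos = s'.pos := (s.strictMono_pos.range_inj s'.strictMono_pos).1 <| by
    simpa [posSet] using congrArg ((↑) : Finset ℤ → Set ℤ)
      (show s.posSet = s'.posSet by rw [posSet_eq_sdiff_negSet, posSet_eq_sdiff_negSet, h])
  have hneg : s.neg = s'.neg := (s.strictMono_neg.range_inj s'.strictMono_neg).1 <| by
    simpa [negSet] using congrArg ((↑) : Finset ℤ → Set ℤ) h
  refine ext_of_z (funext fun i => ?_)
  rcases exists_rev_or_add_eq hn i with ⟨t, rfl⟩ | ⟨j, rfl⟩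
  · exact congrFun hpos t
  · exact neg_inj.1 (congrFun hneg j)

end RhoSol

namespace IsAdmissible

theorem card_sdiff_eq {n p q : ℕ} {N : Finset ℤ} (hN : IsAdmissible n p N) (hn : q - 1 + p = n) :
    #(Icc 1 (n : ℤ) \ N) = q - 1 := by
  rw [card_sdiff_of_subset hN.1, Int.card_Icc, hN.2.1]; omega

variable {n p q : ℕ} {N : Finset ℤ} (hN : IsAdmissible n p N) (hn : q - 1 + p = n)

noncomputable def posEnum : Fin (q - 1) ↪o ℤ :=
  (Icc 1 (n : ℤ) \ N).orderEmbOfFin (hN.card_sdiff_eq hn)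

noncomputable def negEnum : Fin p ↪o ℤ := N.orderEmbOfFin hN.2.1

theorem posEnum_mem (t : Fin (q - 1)) : hN.posEnum hn t ∈ Icc 1 (n : ℤ) \ N :=
  orderEmbOfFin_mem _ _ t

theorem negEnum_mem (j : Fin p) : hN.negEnum j ∈ N := orderEmbOfFin_mem _ _ j

theorem posEnum_eq (t : Fin (q - 1)) :
    hN.posEnum hn t = t + 1 + 2 * (#{x ∈ N | x < hN.posEnum hn t} / 2 : ℕ) := by
  have heven := hN.2.2.2 _ (hN.posEnum_mem hn t)
  rw [Nat.cast_two.symm, ← Nat.cast_mul, Nat.two_mul_div_two_of_even heven]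
  exact (hN.posEnum hn).strictMono.eq_add_card_filter_lt disjoint_sdiff_self_left
    (sdiff_union_of_subset hN.1) (image_orderEmbOfFin_univ _ _) t

theorem negEnum_eq (j : Fin p) :
    hN.negEnum j = j + 1 + 2 * (#{x ∈ Icc 1 (n : ℤ) \ N | x < hN.negEnum j} / 2 : ℕ) := by
  have heven := hN.2.2.1 _ (hN.negEnum_mem j)
  rw [Nat.cast_two.symm, ← Nat.cast_mul, Nat.two_mul_div_two_of_even heven]
  exact hN.negEnum.strictMono.eq_add_card_filter_lt disjoint_sdiff
    (union_sdiff_of_subset hN.1) (image_orderEmbOfFin_univ _ _) j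

noncomputable def signedEnum (i : Fin n) : ℤ :=
  if h : i < q - 1 then hN.posEnum hn (Fin.rev ⟨i, h⟩) else -hN.negEnum ⟨i - (q - 1), by omega⟩

theorem signedEnum_rev (t : Fin (q - 1)) :
    hN.signedEnum hn ⟨t.rev, by omega⟩ = hN.posEnum hn t := by
  rw [signedEnum, dif_pos t.rev.isLt, Fin.eta, Fin.rev_rev]

theorem signedEnum_add (j : Fin p) : hN.signedEnum hn ⟨q - 1 + j, by omega⟩ = -hN.negEnum j := by
  rw [signedEnum, dif_neg (by simp)]
  congr 2
  ext; simp

theorem one_le_posEnum (t : Fin (q - 1)) : 1 ≤ hN.posEnum hn t :=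
  (mem_Icc.1 (mem_sdiff.1 (hN.posEnum_mem hn t)).1).1

theorem one_le_negEnum (j : Fin p) : 1 ≤ hN.negEnum j := (mem_Icc.1 (hN.1 (hN.negEnum_mem j))).1

theorem strictAnti_signedEnum : StrictAnti (hN.signedEnum hn) := by
  intro i i' (h : (i : ℕ) < i')
  simp only [signedEnum]
  split_ifs with h₁ h₂ h₂
  · exact (hN.posEnum hn).strictMono (Fin.rev_lt_rev.2 h)
  · omega
  · have := hN.one_le_posEnum hn (Fin.rev ⟨i, h₂⟩)
    have := hN.one_le_negEnum ⟨i' - (q - 1), by omega⟩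
    omega
  · exact neg_lt_neg (hN.negEnum.strictMono (Fin.mk_lt_mk.2 (by omega)))

theorem image_abs_signedEnum : univ.image (fun i => |hN.signedEnum hn i|) = Icc 1 (n : ℤ) := by
  ext v
  simp only [mem_image, mem_univ, true_and]
  constructor
  · rintro ⟨i, rfl⟩
    rcases exists_rev_or_add_eq hn i with ⟨t, rfl⟩ | ⟨j, rfl⟩
    · rw [signedEnum_rev, abs_of_pos (hN.one_le_posEnum hn t)]
      exact (mem_sdiff.1 (hN.posEnum_mem hn t)).1
    · rw [signedEnum_add, abs_neg, abs_of_pos (hN.one_le_negEnum j)]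
      exact hN.1 (hN.negEnum_mem j)
  · intro hv
    by_cases hvN : v ∈ N
    · obtain ⟨j, rfl⟩ : v ∈ Set.range hN.negEnum := by
        rwa [negEnum, range_orderEmbOfFin]
      exact ⟨_, by rw [signedEnum_add, abs_neg, abs_of_pos (hN.one_le_negEnum j)]⟩
    · obtain ⟨t, rfl⟩ : v ∈ Set.range (hN.posEnum hn) := by
        rw [posEnum, range_orderEmbOfFin]; exact mem_sdiff.2 ⟨hv, hvN⟩
      exact ⟨_, by rw [signedEnum_rev, abs_of_pos (hN.one_le_posEnum hn t)]⟩

end IsAdmissible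

namespace RhoSol

variable {n p q : ℕ} {hn : q - 1 + p = n}

noncomputable def ofAdmissible {N : Finset ℤ} (hN : IsAdmissible n p N) : RhoSol n p q hn where
  z := hN.signedEnum hn
  b i := (#{x ∈ N | x < hN.posEnum hn i.rev} / 2 : ℕ)
  a m := (#{x ∈ Icc 1 (n : ℤ) \ N | x < hN.negEnum m.rev} / 2 : ℕ)
  z_anti := hN.strictAnti_signedEnum hn
  z_abs := hN.image_abs_signedEnum hn
  b_anti i i' h := Nat.cast_le.2 <| Nat.div_le_div_right <| card_le_card <| monotone_filter_right _
    fun _ _ hx => hx.trans_le ((hN.posEnum hn).monotone (Fin.rev_le_rev.2 h))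
  a_anti m m' h := Nat.cast_le.2 <| Nat.div_le_div_right <| card_le_card <| monotone_filter_right _
    fun _ _ hx => hx.trans_le (hN.negEnum.monotone (Fin.rev_le_rev.2 h))
  b_nonneg _ := Nat.cast_nonneg _
  a_nonneg _ := Nat.cast_nonneg _
  hzb i := by
    have h₁ := hN.signedEnum_rev hn i.rev
    simp only [Fin.rev_rev] at h₁
    have h₂ := hN.posEnum_eq hn i.rev
    have h₃ := Fin.val_rev i
    omega
  hza j := by
    rw [show (⟨p - 1 - j, _⟩ : Fin p).rev = j by ext; simp only [Fin.val_rev]; omega,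
      hN.signedEnum_add hn j]
    have := hN.negEnum_eq j
    omega

theorem negSet_ofAdmissible {N : Finset ℤ} (hN : IsAdmissible n p N) :
    (ofAdmissible (hn := hn) hN).negSet = N := by
  have : (ofAdmissible (hn := hn) hN).neg = hN.negEnum := funext fun j => by
    simp only [neg, ofAdmissible, hN.signedEnum_add hn j, _root_.neg_neg]
  rw [negSet, this, IsAdmissible.negEnum, image_orderEmbOfFin_univ]

theorem card_eq_choose {n p q k : ℕ} (hn : q - 1 + p = n) (hpq : p + q = 2 * k)
    (hp : p % 2 = 1) : Nat.card (RhoSol n p q hn) = (k - 1).choose ((p - 1) / 2) := by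
  have hk : (0 : ℤ) < k := by omega
  have hnk : (n : ℤ) = 2 * k - 1 := by omega
  set X := (powersetCard ((p - 1) / 2) (Ico (0 : ℤ) (k - 1))).image (blockSet k)
  have hmem {N : Finset ℤ} : IsAdmissible n p N ↔ N ∈ X := by
    rw [hnk]; exact isAdmissible_iff_mem_image_blockSet hk (Nat.odd_iff.2 hp)
  have hbij : Function.Bijective
      fun s : RhoSol n p q hn => (⟨s.negSet, hmem.1 s.isAdmissible_negSet⟩ : X) :=
    ⟨fun s s' h => negSet_injective (congrArg Subtype.val h),
      fun N => ⟨ofAdmissible (hmem.2 N.2), Subtype.ext (negSet_ofAdmissible _)⟩⟩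
  rw [Nat.card_eq_of_bijective _ hbij, Nat.card_eq_finsetCard,
    card_image_of_injOn ((blockSet_injOn k).mono fun S hS => (mem_powersetCard.1 hS).1),
    card_powersetCard, Int.card_Ico]
  congr 1
  omega

end RhoSol

/-- Theorem on `X'(p,q;1,0)` with `p, q` odd: the number of solutions equals
`C(k−1, (p−1)/2) = C(k−1, (q−1)/2)` (here `n = 2k−1`, `p + q = 2k`, `p, q` odd). -/
theorem stmt16 (n k p q : ℕ) (hn : n = 2 * k - 1) (hpq : p + q = 2 * k) (hpo : p % 2 = 1) :
    Nat.card (RhoSol n p q (by omega)) = Nat.choose (k - 1) ((p - 1) / 2) ∧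
      Nat.choose (k - 1) ((p - 1) / 2) = Nat.choose (k - 1) ((q - 1) / 2) := by
  refine ⟨RhoSol.card_eq_choose _ hpq hpo, ?_⟩
  rw [← Nat.choose_symm (by omega)]
  congr 1
  omega
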